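/- With the hypercube data and definitions below, for every pair I ≤ J in {0,1}^l one has A-check(I,J) = Σ_{I≤K≤J} D-check(K,J) ∘ D-check(I,K); that is, the operator assembled from the boundary-counting components A and Abar equals the corresponding component of the square of the total map D-check. -/

import Mathlib

open Finset

lemma swap2 {α M : Type*} [Preorder α] [LocallyFiniteOrder α] [AddCommMonoid M]
    (I J : α) (f : α → α → M) :
    ∑ K ∈ Icc I J, ∑ L ∈ Icc K J, f K L = ∑ L ∈ Icc I J, ∑ K ∈ Icc I L, f K L := by
  refine Finset.sum_comm' ?_
  intro K L
  simp only [mem_Icc]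
  constructor
  · rintro ⟨⟨h1, h2⟩, h3, h4⟩
    exact ⟨⟨h1, h3⟩, h1.trans h3, h4⟩
  · rintro ⟨⟨h1, h3⟩, h5, h4⟩
    exact ⟨⟨h1, h3.trans h4⟩, h3, h4⟩

lemma tri3 {α M : Type*} [Preorder α] [LocallyFiniteOrder α] [AddCommMonoid M]
    (I J : α) (g : α → α → α → M) :
    ∑ K ∈ Icc I J, ∑ L ∈ Icc K J, ∑ N ∈ Icc I K, g N K L
      = ∑ K ∈ Icc I J, ∑ L ∈ Icc K J, ∑ N ∈ Icc L J, g K L N := by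
  calc ∑ K ∈ Icc I J, ∑ L ∈ Icc K J, ∑ N ∈ Icc I K, g N K L
      = ∑ K ∈ Icc I J, ∑ N ∈ Icc I K, ∑ L ∈ Icc K J, g N K L :=
        Finset.sum_congr rfl fun K _ => Finset.sum_comm
    _ = ∑ N ∈ Icc I J, ∑ K ∈ Icc N J, ∑ L ∈ Icc K J, g N K L :=
        (swap2 I J fun a b => ∑ L ∈ Icc b J, g a b L).symm
    _ = ∑ K ∈ Icc I J, ∑ L ∈ Icc K J, ∑ N ∈ Icc L J, g K L N := rfl

lemma tri3' {α M : Type*} [Preorder α] [LocallyFiniteOrder α] [AddCommMonoid M]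
    (I J : α) (g : α → α → α → M) :
    ∑ K ∈ Icc I J, ∑ N ∈ Icc I K, ∑ L ∈ Icc K J, g N K L
      = ∑ K ∈ Icc I J, ∑ L ∈ Icc K J, ∑ N ∈ Icc L J, g K L N := by
  rw [← tri3 I J g]
  exact Finset.sum_congr rfl fun K _ => Finset.sum_comm

lemma char2_self {M : Type*} [AddCommGroup M] [Module (ZMod 2) M] (x : M) : x + x = 0 := by
  have h : ((2 : ZMod 2)) • x = 0 := by
    have : (2 : ZMod 2) = 0 := rfl
    rw [this, zero_smul]
  simpa [two_smul] using h



set_option maxHeartbeats 2000000 in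
/-- **Lemma (hypercube identity): `A-check(I,J) = Σ_{I≤K≤J} D-check(K,J) ∘ D-check(I,K)`.**
Vertices of the hypercube `{0,1}^l` are functions `Fin l → Fin 2`, ordered
componentwise.  For each vertex there are `F₂`-vector spaces `Co, Cs, Cu`, and for each
pair of vertices eight linear maps.  The operator `A-check(I,J)` assembled from the
boundary-counting components equals the `(I,J)`-component of the square of the total
map `D-check`. -/
theorem ACheck_eq_DCheck_squared_component {l : ℕ}
    (Co Cs Cu : (Fin l → Fin 2) → Type*)
    [∀ I, AddCommGroup (Co I)] [∀ I, AddCommGroup (Cs I)] [∀ I, AddCommGroup (Cu I)]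
    [∀ I, Module (ZMod 2) (Co I)] [∀ I, Module (ZMod 2) (Cs I)]
    [∀ I, Module (ZMod 2) (Cu I)]
    (Doo : ∀ I J : Fin l → Fin 2, Co I →ₗ[ZMod 2] Co J)
    (Dos : ∀ I J : Fin l → Fin 2, Co I →ₗ[ZMod 2] Cs J)
    (Duo : ∀ I J : Fin l → Fin 2, Cu I →ₗ[ZMod 2] Co J)
    (Dus : ∀ I J : Fin l → Fin 2, Cu I →ₗ[ZMod 2] Cs J)
    (Dbss : ∀ I J : Fin l → Fin 2, Cs I →ₗ[ZMod 2] Cs J)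
    (Dbsu : ∀ I J : Fin l → Fin 2, Cs I →ₗ[ZMod 2] Cu J)
    (Dbus : ∀ I J : Fin l → Fin 2, Cu I →ₗ[ZMod 2] Cs J)
    (Dbuu : ∀ I J : Fin l → Fin 2, Cu I →ₗ[ZMod 2] Cu J)
    (I J : Fin l → Fin 2) (hIJ : I ≤ J) :
    let DCheck : ∀ P Q : Fin l → Fin 2, (Co P × Cs P) →ₗ[ZMod 2] (Co Q × Cs Q) :=
      fun P Q =>
        LinearMap.prod
          (Doo P Q ∘ₗ LinearMap.fst (ZMod 2) (Co P) (Cs P)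
            + (∑ K ∈ Finset.Icc P Q, Duo K Q ∘ₗ Dbsu P K) ∘ₗ
                LinearMap.snd (ZMod 2) (Co P) (Cs P))
          (Dos P Q ∘ₗ LinearMap.fst (ZMod 2) (Co P) (Cs P)
            + (Dbss P Q + ∑ K ∈ Finset.Icc P Q, Dus K Q ∘ₗ Dbsu P K) ∘ₗ
                LinearMap.snd (ZMod 2) (Co P) (Cs P))
    let Aoo : ∀ P Q : Fin l → Fin 2, Co P →ₗ[ZMod 2] Co Q := fun P Q =>
      (∑ K ∈ Finset.Icc P Q, Doo K Q ∘ₗ Doo P K)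
        + ∑ K ∈ Finset.Icc P Q, ∑ M ∈ Finset.Icc K Q, Duo M Q ∘ₗ Dbsu K M ∘ₗ Dos P K
    let Aos : ∀ P Q : Fin l → Fin 2, Co P →ₗ[ZMod 2] Cs Q := fun P Q =>
      (∑ K ∈ Finset.Icc P Q, (Dos K Q ∘ₗ Doo P K + Dbss K Q ∘ₗ Dos P K))
        + ∑ K ∈ Finset.Icc P Q, ∑ M ∈ Finset.Icc K Q, Dus M Q ∘ₗ Dbsu K M ∘ₗ Dos P K
    let Auo : ∀ P Q : Fin l → Fin 2, Cu P →ₗ[ZMod 2] Co Q := fun P Q =>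
      (∑ K ∈ Finset.Icc P Q, (Doo K Q ∘ₗ Duo P K + Duo K Q ∘ₗ Dbuu P K))
        + ∑ K ∈ Finset.Icc P Q, ∑ M ∈ Finset.Icc K Q, Duo M Q ∘ₗ Dbsu K M ∘ₗ Dus P K
    let Aus : ∀ P Q : Fin l → Fin 2, Cu P →ₗ[ZMod 2] Cs Q := fun P Q =>
      Dbus P Q
        + (∑ K ∈ Finset.Icc P Q,
            (Dos K Q ∘ₗ Duo P K + Dbss K Q ∘ₗ Dus P K + Dus K Q ∘ₗ Dbuu P K))
        + ∑ K ∈ Finset.Icc P Q, ∑ M ∈ Finset.Icc K Q, Dus M Q ∘ₗ Dbsu K M ∘ₗ Dus P K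
    let Abss : ∀ P Q : Fin l → Fin 2, Cs P →ₗ[ZMod 2] Cs Q := fun P Q =>
      ∑ K ∈ Finset.Icc P Q, (Dbss K Q ∘ₗ Dbss P K + Dbus K Q ∘ₗ Dbsu P K)
    let Absu : ∀ P Q : Fin l → Fin 2, Cs P →ₗ[ZMod 2] Cu Q := fun P Q =>
      ∑ K ∈ Finset.Icc P Q, (Dbsu K Q ∘ₗ Dbss P K + Dbuu K Q ∘ₗ Dbsu P K)
    let ACheck : (Co I × Cs I) →ₗ[ZMod 2] (Co J × Cs J) :=
      LinearMap.prod
        (Aoo I J ∘ₗ LinearMap.fst (ZMod 2) (Co I) (Cs I)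
          + (∑ K ∈ Finset.Icc I J, (Auo K J ∘ₗ Dbsu I K + Duo K J ∘ₗ Absu I K)) ∘ₗ
              LinearMap.snd (ZMod 2) (Co I) (Cs I))
        (Aos I J ∘ₗ LinearMap.fst (ZMod 2) (Co I) (Cs I)
          + (Abss I J
              + ∑ K ∈ Finset.Icc I J, (Aus K J ∘ₗ Dbsu I K + Dus K J ∘ₗ Absu I K)) ∘ₗ
              LinearMap.snd (ZMod 2) (Co I) (Cs I))
    ACheck = ∑ K ∈ Finset.Icc I J, DCheck K J ∘ₗ DCheck I K := by
  intro DCheck Aoo Aos Auo Aus Abss Absu ACheck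
  refine LinearMap.ext fun p => ?_
  simp only [ACheck, DCheck, Aoo, Aos, Auo, Aus, Abss, Absu, LinearMap.sum_apply,
    LinearMap.comp_apply, LinearMap.add_apply, LinearMap.prod_apply, LinearMap.fst_apply,
    LinearMap.snd_apply, Function.prod, map_sum, map_add, Finset.sum_add_distrib]
  clear_value DCheck Aoo Aos Auo Aus Abss Absu ACheck
  clear DCheck Aoo Aos Auo Aus Abss Absu ACheck hIJ
  refine Prod.ext ?_ ?_ <;>
    simp only [Prod.fst_sum, Prod.snd_sum, Prod.fst_add, Prod.snd_add, Finset.sum_add_distrib]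
  · simp only [swap2 I J (fun K L => (Doo L J) ((Duo K L) ((Dbsu I K) p.2))),
      swap2 I J (fun K L => (Duo L J) ((Dbuu K L) ((Dbsu I K) p.2))),
      ← tri3' I J (fun N K L => (Duo L J) ((Dbsu K L) ((Dus N K) ((Dbsu I N) p.2)))),
      ← swap2 I J (fun K L => (Duo L J) ((Dbsu K L) ((Dbss I K) p.2)))]
    generalize (∑ x ∈ Finset.Icc I J, (Doo x J) ((Doo I x) p.1)) = a1
    generalize (∑ x ∈ Finset.Icc I J, ∑ y ∈ Finset.Icc x J, (Duo y J) ((Dbsu x y) ((Dos I x) p.1))) = a2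
    generalize (∑ x ∈ Finset.Icc I J, ∑ y ∈ Finset.Icc I x, (Doo x J) ((Duo y x) ((Dbsu I y) p.2))) = a3
    generalize (∑ x ∈ Finset.Icc I J, ∑ y ∈ Finset.Icc I x, (Duo x J) ((Dbuu y x) ((Dbsu I y) p.2))) = a4
    generalize (∑ x ∈ Finset.Icc I J, ∑ y ∈ Finset.Icc I x, ∑ z ∈ Finset.Icc x J,
      (Duo z J) ((Dbsu x z) ((Dus y x) ((Dbsu I y) p.2)))) = a5
    generalize (∑ x ∈ Finset.Icc I J, ∑ y ∈ Finset.Icc x J, (Duo y J) ((Dbsu x y) ((Dbss I x) p.2))) = a6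
    have h4 := char2_self a4
    rw [← sub_eq_zero]
    abel_nf
    rw [two_smul, h4]
  · simp only [swap2 I J (fun K L => (Dos L J) ((Duo K L) ((Dbsu I K) p.2))),
      swap2 I J (fun K L => (Dbss L J) ((Dus K L) ((Dbsu I K) p.2))),
      swap2 I J (fun K L => (Dus L J) ((Dbuu K L) ((Dbsu I K) p.2))),
      ← tri3' I J (fun N K L => (Dus L J) ((Dbsu K L) ((Dus N K) ((Dbsu I N) p.2)))),
      ← swap2 I J (fun K L => (Dus L J) ((Dbsu K L) ((Dbss I K) p.2)))]
    generalize (∑ x ∈ Finset.Icc I J, (Dos x J) ((Doo I x) p.1)) = b1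
    generalize (∑ x ∈ Finset.Icc I J, (Dbss x J) ((Dos I x) p.1)) = b2
    generalize (∑ x ∈ Finset.Icc I J, ∑ y ∈ Finset.Icc x J, (Dus y J) ((Dbsu x y) ((Dos I x) p.1))) = b3
    generalize (∑ x ∈ Finset.Icc I J, (Dbss x J) ((Dbss I x) p.2)) = b4
    generalize (∑ x ∈ Finset.Icc I J, (Dbus x J) ((Dbsu I x) p.2)) = b5
    generalize (∑ x ∈ Finset.Icc I J, ∑ y ∈ Finset.Icc I x, (Dos x J) ((Duo y x) ((Dbsu I y) p.2))) = b6
    generalize (∑ x ∈ Finset.Icc I J, ∑ y ∈ Finset.Icc I x, (Dbss x J) ((Dus y x) ((Dbsu I y) p.2))) = b7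
    generalize (∑ x ∈ Finset.Icc I J, ∑ y ∈ Finset.Icc I x, (Dus x J) ((Dbuu y x) ((Dbsu I y) p.2))) = b8
    generalize (∑ x ∈ Finset.Icc I J, ∑ y ∈ Finset.Icc I x, ∑ z ∈ Finset.Icc x J,
      (Dus z J) ((Dbsu x z) ((Dus y x) ((Dbsu I y) p.2)))) = b9
    generalize (∑ x ∈ Finset.Icc I J, ∑ y ∈ Finset.Icc x J, (Dus y J) ((Dbsu x y) ((Dbss I x) p.2))) = b10
    have h5 := char2_self b5
    have h8 := char2_self b8
    rw [← sub_eq_zero]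
    abel_nf
    rw [two_smul, two_smul, h5, h8, add_zero]
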